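/- Let P be a probability measure on Θ² = [0,1]×[0,1], let T : Θ² → ℝ₊ be a bounded measurable function with P{(θ,θ') : T(θ,θ') = c} = 0 for every c ≥ 0, and let Q be a probability measure on Θ² absolutely continuous with respect to P. Then there exists a probability measure Q_T on Θ², absolutely continuous with respect to P, which is a rearrangement of Q with respect to P and admits a density ρ = dQ_T/dP satisfying: for all (θ,θ'), (φ,φ') ∈ Θ², T(θ,θ') < T(φ,φ') implies ρ(θ,θ') ≥ ρ(φ,φ'); T(θ,θ') > T(φ,φ') implies ρ(θ,θ') ≤ ρ(φ,φ'); and T(θ,θ') = T(φ,φ') implies ρ(θ,θ') = ρ(φ,φ'). Moreover ∬_{Θ²} T dQ_T ≤ ∬_{Θ²} T dQ. -/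

import Mathlib

open MeasureTheory
open Set

noncomputable section

abbrev Θ : Type := ↥(Set.Icc (0:ℝ) 1)

/-- `ν'` is a rearrangement of `ν` with respect to `μ`. -/
def IsRearrangement {Ω : Type*} [MeasurableSpace Ω] (μ ν ν' : Measure Ω) : Prop :=
  ∀ c : ENNReal, μ {ω | ν'.rnDeriv μ ω ≤ c} = μ {ω | ν.rnDeriv μ ω ≤ c}

/-- Layer cake formula for `ℝ≥0∞`-valued functions. -/
lemma aux_layercake {α : Type*} [MeasurableSpace α] (ν : Measure α) [SFinite ν]
    {k : α → ENNReal} (hk : Measurable k) :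
    ∫⁻ x, k x ∂ν = ∫⁻ t in Set.Ioi (0:ℝ), ν {x | ENNReal.ofReal t < k x} := by
  have hset : MeasurableSet {p : ℝ × α | ENNReal.ofReal p.1 < k p.2} :=
    measurableSet_lt (ENNReal.measurable_ofReal.comp measurable_fst) (hk.comp measurable_snd)
  set S : Set (ℝ × α) := {p : ℝ × α | ENNReal.ofReal p.1 < k p.2} with hS
  set F : ℝ → α → ENNReal := fun t x => S.indicator 1 (t, x) with hF
  have hunc : AEMeasurable (Function.uncurry F) ((volume.restrict (Set.Ioi (0:ℝ))).prod ν) := by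
    have : Function.uncurry F = S.indicator 1 := by
      funext p; simp [hF, Function.uncurry]
    rw [this]
    exact ((measurable_one.indicator hset)).aemeasurable
  have h1 : ∀ t : ℝ, ν {x | ENNReal.ofReal t < k x} = ∫⁻ x, F t x ∂ν := by
    intro t
    have hslice : MeasurableSet {x | ENNReal.ofReal t < k x} :=
      measurableSet_lt measurable_const hk
    have : ∀ x, F t x = ({x | ENNReal.ofReal t < k x} : Set α).indicator 1 x := by
      intro x
      by_cases h : ENNReal.ofReal t < k x <;> simp [hF, hS, Set.indicator, h]
    rw [funext this, lintegral_indicator_one hslice]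
  have h2 : ∀ x : α, ∫⁻ t in Set.Ioi (0:ℝ), F t x = k x := by
    intro x
    have hslice : MeasurableSet {t : ℝ | ENNReal.ofReal t < k x} :=
      measurableSet_lt ENNReal.measurable_ofReal measurable_const
    have heq : ∀ t, F t x = ({t : ℝ | ENNReal.ofReal t < k x} : Set ℝ).indicator 1 t := by
      intro t
      by_cases h : ENNReal.ofReal t < k x <;> simp [hF, hS, Set.indicator, h]
    rw [funext heq, lintegral_indicator_one hslice,
      Measure.restrict_apply hslice]
    rcases eq_or_ne (k x) ⊤ with htop | hfin
    · have : {t : ℝ | ENNReal.ofReal t < k x} ∩ Set.Ioi 0 = Set.Ioi 0 := by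
        ext t; simp [htop]
      rw [this, Real.volume_Ioi]
      exact htop.symm
    · have : {t : ℝ | ENNReal.ofReal t < k x} ∩ Set.Ioi 0 = Set.Ioo 0 ((k x).toReal) := by
        ext t
        simp only [Set.mem_inter_iff, Set.mem_setOf_eq, Set.mem_Ioi, Set.mem_Ioo]
        constructor
        · rintro ⟨h1, h2⟩
          exact ⟨h2, (ENNReal.ofReal_lt_iff_lt_toReal h2.le hfin).mp h1⟩
        · rintro ⟨h1, h2⟩
          exact ⟨(ENNReal.ofReal_lt_iff_lt_toReal h1.le hfin).mpr h2, h1⟩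
      rw [this, Real.volume_Ioo, ENNReal.ofReal_sub _ le_rfl]
      simp [ENNReal.ofReal_toReal hfin]
  calc ∫⁻ x, k x ∂ν = ∫⁻ x, (∫⁻ t in Set.Ioi (0:ℝ), F t x) ∂ν := by
        simp_rw [h2]
    _ = ∫⁻ t in Set.Ioi (0:ℝ), (∫⁻ x, F t x ∂ν) := by
        rw [← lintegral_lintegral_swap hunc]
    _ = ∫⁻ t in Set.Ioi (0:ℝ), ν {x | ENNReal.ofReal t < k x} := by
        simp_rw [h1]

/-- Bathtub principle comparison. -/
lemma aux_bathtub {α : Type*} [MeasurableSpace α] (μ : Measure α) [IsFiniteMeasure μ]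
    {T' : α → ENNReal} (hT' : Measurable T') {A B : Set α}
    (hA : MeasurableSet A) (hB : MeasurableSet B) (hAB : μ B = μ A)
    {s : ENNReal} (hBle : ∀ x ∈ B, T' x ≤ s) (hBge : ∀ x ∉ B, s ≤ T' x) :
    ∫⁻ x in B, T' x ∂μ ≤ ∫⁻ x in A, T' x ∂μ := by
  have hBA : μ (B \ A) = μ (A \ B) := by
    have h1 : μ (B ∩ A) + μ (B \ A) = μ B := by
      rw [← measure_union (disjoint_sdiff_right.mono_left Set.inter_subset_right) (hB.diff hA)]
      congr 1
      rw [Set.inter_union_diff]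
    have h2 : μ (B ∩ A) + μ (A \ B) = μ A := by
      rw [← measure_union _ (hA.diff hB)]
      · congr 1
        rw [Set.inter_comm, Set.inter_union_diff]
      · exact disjoint_sdiff_right.mono_left Set.inter_subset_left
    have hfin : μ (B ∩ A) ≠ ⊤ := measure_ne_top μ _
    have := h1.trans (hAB.trans h2.symm)
    exact (ENNReal.add_right_inj hfin).mp this
  have hdecB : ∫⁻ x in B, T' x ∂μ = ∫⁻ x in B ∩ A, T' x ∂μ + ∫⁻ x in B \ A, T' x ∂μ := by
    rw [← lintegral_union (hB.diff hA) (disjoint_sdiff_right.mono_left Set.inter_subset_right),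
      Set.inter_union_diff]
  have hdecA : ∫⁻ x in A, T' x ∂μ = ∫⁻ x in B ∩ A, T' x ∂μ + ∫⁻ x in A \ B, T' x ∂μ := by
    rw [← lintegral_union (hA.diff hB) (disjoint_sdiff_right.mono_left Set.inter_subset_left),
      Set.inter_comm, Set.inter_union_diff]
  have hle1 : ∫⁻ x in B \ A, T' x ∂μ ≤ s * μ (B \ A) := by
    calc ∫⁻ x in B \ A, T' x ∂μ ≤ ∫⁻ _ in B \ A, s ∂μ :=
          setLIntegral_mono measurable_const (fun x hx => hBle x hx.1)
      _ = s * μ (B \ A) := by rw [setLIntegral_const]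
  have hle2 : s * μ (A \ B) ≤ ∫⁻ x in A \ B, T' x ∂μ := by
    calc s * μ (A \ B) = ∫⁻ _ in A \ B, s ∂μ := by rw [setLIntegral_const]
      _ ≤ ∫⁻ x in A \ B, T' x ∂μ :=
          setLIntegral_mono hT' (fun x hx => hBge x hx.2)
  rw [hdecB, hdecA]
  exact add_le_add le_rfl (hle1.trans (by rw [hBA]; exact hle2))

theorem stmt7
    (P : Measure (Θ × Θ)) [IsProbabilityMeasure P]
    (T : Θ × Θ → ℝ)
    (hTm : Measurable T) (hT0 : ∀ x, 0 ≤ T x) (hTbdd : ∃ M : ℝ, ∀ x, T x ≤ M)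
    -- the distribution of T under P is atomless
    (hatomless : ∀ c : ℝ, 0 ≤ c → P {x | T x = c} = 0)
    (Q : Measure (Θ × Θ)) [IsProbabilityMeasure Q] (hQ : Q ≪ P) :
    ∃ QT : Measure (Θ × Θ), IsProbabilityMeasure QT ∧ QT ≪ P ∧
      IsRearrangement P Q QT ∧
      (∃ ρ : Θ × Θ → ENNReal, QT.rnDeriv P =ᵐ[P] ρ ∧
        (∀ x y : Θ × Θ, T x < T y → ρ y ≤ ρ x) ∧
        (∀ x y : Θ × Θ, T y < T x → ρ x ≤ ρ y) ∧
        (∀ x y : Θ × Θ, T x = T y → ρ x = ρ y)) ∧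
      ∫⁻ x, ENNReal.ofReal (T x) ∂QT ≤ ∫⁻ x, ENNReal.ofReal (T x) ∂Q := by
  obtain ⟨M, hM⟩ := hTbdd
  haveI : Q.HaveLebesgueDecomposition P := Measure.haveLebesgueDecomposition_of_sigmaFinite Q P
  set f := Q.rnDeriv P with hfdef
  have hf : Measurable f := Q.measurable_rnDeriv P
  set Ff : ENNReal → ENNReal := fun c => P {x | f x ≤ c} with hFf
  set h : ℝ → ENNReal := fun t => P {x | t < T x} with hh
  set g : ℝ → ENNReal := fun t => sInf {c | h t ≤ Ff c} with hg
  have hFfmono : Monotone Ff := fun c c' hcc => measure_mono (fun x hx => le_trans hx hcc)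
  have hhanti : Antitone h := fun t t' htt => measure_mono (fun x hx => lt_of_le_of_lt htt hx)
  have hganti : Antitone g := fun t t' htt =>
    sInf_le_sInf (fun c hc => le_trans (hhanti htt) hc)
  have hFumem : ∀ t, h t ≤ Ff (g t) := by
    intro t
    have htopmem : h t ≤ Ff ⊤ := by
      have : {x | f x ≤ (⊤:ENNReal)} = Set.univ := by ext x; simp
      simp only [hFf, this]
      exact measure_mono (Set.subset_univ _)
    rcases eq_or_ne (g t) ⊤ with htop | hfin
    · rw [htop]; exact htopmem
    · have hgt : ∀ c, g t < c → h t ≤ Ff c := by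
        intro c hc
        obtain ⟨c₀, hc₀, hc₀c⟩ := sInf_lt_iff.mp hc
        exact le_trans hc₀ (hFfmono hc₀c.le)
      have hseq : ∀ n : ℕ, h t ≤ Ff (g t + ((n:ENNReal)+1)⁻¹) :=
        fun n => hgt _ (ENNReal.lt_add_right hfin (by simp))
      have hiInter : {x | f x ≤ g t} = ⋂ n : ℕ, {x | f x ≤ g t + ((n:ENNReal)+1)⁻¹} := by
        ext x
        simp only [Set.mem_setOf_eq, Set.mem_iInter]
        constructor
        · exact fun hx n => le_trans hx le_self_add
        · intro hx
          refine ENNReal.le_of_forall_pos_le_add (fun ε hε hlt => ?_)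
          obtain ⟨n, hn⟩ := ENNReal.exists_inv_nat_lt (a := (ε:ENNReal)) (by simpa using hε.ne')
          refine le_trans (hx n) (add_le_add le_rfl ?_)
          refine le_trans ?_ hn.le
          exact ENNReal.inv_le_inv.mpr (by simp)
      have hdir : Directed (· ⊇ ·) (fun n : ℕ => {x | f x ≤ g t + ((n:ENNReal)+1)⁻¹}) := by
        intro m n
        refine ⟨max m n, ?_, ?_⟩ <;>
        · intro x hx
          refine le_trans hx (add_le_add le_rfl (ENNReal.inv_le_inv.mpr (add_le_add ?_ le_rfl)))
          first
            | exact_mod_cast le_max_left m n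
            | exact_mod_cast le_max_right m n
      have hInterEq := Directed.measure_iInter (μ := P)
        (fun n : ℕ => (measurableSet_le hf measurable_const).nullMeasurableSet) hdir
        ⟨0, measure_ne_top _ _⟩
      calc h t ≤ ⨅ n : ℕ, Ff (g t + ((n:ENNReal)+1)⁻¹) := le_iInf hseq
        _ = P (⋂ n : ℕ, {x | f x ≤ g t + ((n:ENNReal)+1)⁻¹}) := hInterEq.symm
        _ = Ff (g t) := by rw [← hiInter]
  have hiff : ∀ t c, g t ≤ c ↔ h t ≤ Ff c := by
    intro t c
    constructor
    · intro h1; exact le_trans (hFumem t) (hFfmono h1)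
    · intro h1; exact sInf_le h1
  -- Key distribution lemma
  have hA : ∀ c : ENNReal, P {x | g (T x) ≤ c} = Ff c := by
    intro c
    have hsetrw : {x | g (T x) ≤ c} = {x | h (T x) ≤ Ff c} := by
      ext x
      simp only [Set.mem_setOf_eq]
      exact hiff (T x) c
    have hu1 : Ff c ≤ 1 := prob_le_one
    rcases eq_or_lt_of_le hu1 with hu | hu
    · have : {x | h (T x) ≤ Ff c} = Set.univ := by
        ext x
        simp only [Set.mem_setOf_eq, Set.mem_univ, iff_true]
        rw [hu]
        exact prob_le_one
      rw [hsetrw, this, measure_univ, hu]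
    · set u := Ff c with hu'
      set S' := {t : ℝ | h t ≤ u} with hS'
      have hpos : ∀ t ∈ S', 0 ≤ t := by
        intro t ht
        by_contra hlt
        push_neg at hlt
        have huniv : {x : Θ × Θ | t < T x} = Set.univ := by
          ext x; simp only [Set.mem_setOf_eq, Set.mem_univ, iff_true]
          exact lt_of_lt_of_le hlt (hT0 x)
        have h1 : h t = 1 := by simp only [hh, huniv, measure_univ]
        rw [hS'] at ht
        simp only [Set.mem_setOf_eq, h1] at ht
        exact absurd (lt_of_le_of_lt ht hu) (by simp)
      have hMS' : M ∈ S' := by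
        have : {x : Θ × Θ | M < T x} = ∅ := by
          ext x; simp only [Set.mem_setOf_eq, Set.mem_empty_iff_false, iff_false, not_lt]
          exact hM x
        simp only [hS', Set.mem_setOf_eq, hh, this, measure_empty]
        exact zero_le
      have hS'ne : S'.Nonempty := ⟨M, hMS'⟩
      have hS'bdd : BddBelow S' := ⟨0, hpos⟩
      set t₀ := sInf S' with ht₀
      have hupper : ∀ t, t₀ < t → t ∈ S' := by
        intro t ht
        obtain ⟨t₁, ht₁S, ht₁t⟩ := (csInf_lt_iff hS'bdd hS'ne).mp ht
        exact Set.mem_setOf_eq ▸ le_trans (hhanti ht₁t.le) ht₁S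
      have ht₀0 : 0 ≤ t₀ := le_csInf hS'ne hpos
      have hatom : P {x | T x = t₀} = 0 := hatomless t₀ ht₀0
      have hge_eq : P {x | t₀ ≤ T x} = h t₀ := by
        have hsplit : {x : Θ × Θ | t₀ ≤ T x} = {x | t₀ < T x} ∪ {x | T x = t₀} := by
          ext x
          simp only [Set.mem_setOf_eq, Set.mem_union]
          constructor
          · intro hx
            rcases lt_or_eq_of_le hx with h1 | h1
            · exact Or.inl h1
            · exact Or.inr h1.symm
          · rintro (h1 | h1)
            · exact h1.le
            · exact h1.ge
        rw [hsplit]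
        refine le_antisymm ?_ (measure_mono Set.subset_union_left)
        calc P ({x | t₀ < T x} ∪ {x | T x = t₀}) ≤ P {x | t₀ < T x} + P {x | T x = t₀} :=
              measure_union_le _ _
          _ = h t₀ := by rw [hatom, add_zero]
      have hmid : P {x | h (T x) ≤ u} = h t₀ := by
        have hsub1 : {x : Θ × Θ | t₀ < T x} ⊆ {x | h (T x) ≤ u} := fun x hx => hupper _ hx
        have hsub2 : {x : Θ × Θ | h (T x) ≤ u} ⊆ {x | t₀ ≤ T x} :=
          fun x hx => csInf_le hS'bdd hx
        exact le_antisymm (le_trans (measure_mono hsub2) hge_eq.le) (measure_mono hsub1)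
      have hle : h t₀ ≤ u := by
        have hUnion : {x : Θ × Θ | t₀ < T x} = ⋃ n : ℕ, {x | t₀ + 1/((n:ℝ)+1) < T x} := by
          ext x
          simp only [Set.mem_setOf_eq, Set.mem_iUnion]
          constructor
          · intro hx
            obtain ⟨n, hn⟩ := exists_nat_one_div_lt (sub_pos.mpr hx)
            exact ⟨n, by linarith⟩
          · rintro ⟨n, hn⟩
            have hp : 0 < 1/((n:ℝ)+1) := by positivity
            linarith
        have hinv : ∀ m n : ℕ, m ≤ n → 1/((n:ℝ)+1) ≤ 1/((m:ℝ)+1) := by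
          intro m n hmn
          apply one_div_le_one_div_of_le (by positivity)
          have : (m:ℝ) ≤ (n:ℝ) := Nat.cast_le.mpr hmn
          linarith
        have hdir : Directed (· ⊆ ·) (fun n : ℕ => {x : Θ × Θ | t₀ + 1/((n:ℝ)+1) < T x}) := by
          intro m n
          refine ⟨max m n, ?_, ?_⟩ <;>
          · intro x hx
            simp only [Set.mem_setOf_eq] at hx ⊢
            refine lt_of_le_of_lt (add_le_add le_rfl ?_) hx
            first
              | exact hinv m (max m n) (le_max_left m n)
              | exact hinv n (max m n) (le_max_right m n)
        have hUe := Directed.measure_iUnion (μ := P) hdir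
        have heach : ∀ n : ℕ, P {x : Θ × Θ | t₀ + 1/((n:ℝ)+1) < T x} ≤ u := by
          intro n
          have hmem : t₀ + 1/((n:ℝ)+1) ∈ S' := hupper _ (by
            have hp : 0 < 1/((n:ℝ)+1) := by positivity
            linarith)
          exact hmem
        calc h t₀ = P {x : Θ × Θ | t₀ < T x} := rfl
          _ = ⨆ n : ℕ, P {x : Θ × Θ | t₀ + 1/((n:ℝ)+1) < T x} := by rw [hUnion, hUe]
          _ ≤ u := iSup_le heach
      have hge : u ≤ h t₀ := by
        have hInter : {x : Θ × Θ | t₀ ≤ T x} = ⋂ n : ℕ, {x | t₀ - 1/((n:ℝ)+1) < T x} := by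
          ext x
          simp only [Set.mem_setOf_eq, Set.mem_iInter]
          constructor
          · intro hx n
            have hp : 0 < 1/((n:ℝ)+1) := by positivity
            linarith
          · intro hx
            by_contra hlt
            push_neg at hlt
            obtain ⟨n, hn⟩ := exists_nat_one_div_lt (sub_pos.mpr hlt)
            have := hx n
            linarith
        have hinv2 : ∀ m n : ℕ, m ≤ n → 1/((n:ℝ)+1) ≤ 1/((m:ℝ)+1) := by
          intro m n hmn
          apply one_div_le_one_div_of_le (by positivity)
          have : (m:ℝ) ≤ (n:ℝ) := Nat.cast_le.mpr hmn
          linarith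
        have hdir : Directed (· ⊇ ·) (fun n : ℕ => {x : Θ × Θ | t₀ - 1/((n:ℝ)+1) < T x}) := by
          intro m n
          refine ⟨max m n, ?_, ?_⟩ <;>
          · intro x hx
            simp only [Set.mem_setOf_eq] at hx ⊢
            refine lt_of_le_of_lt (sub_le_sub le_rfl ?_) hx
            first
              | exact hinv2 m (max m n) (le_max_left m n)
              | exact hinv2 n (max m n) (le_max_right m n)
        have hIe := Directed.measure_iInter (μ := P)
          (fun n : ℕ => (measurableSet_lt measurable_const hTm).nullMeasurableSet) hdir
          ⟨0, measure_ne_top _ _⟩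
        have heach : ∀ n : ℕ, u ≤ P {x : Θ × Θ | t₀ - 1/((n:ℝ)+1) < T x} := by
          intro n
          have hnot : t₀ - 1/((n:ℝ)+1) ∉ S' := by
            intro hmem
            have := csInf_le hS'bdd hmem
            have hp : 0 < 1/((n:ℝ)+1) := by positivity
            rw [← ht₀] at this
            linarith
          simp only [hS', Set.mem_setOf_eq, not_le] at hnot
          exact hnot.le
        calc u ≤ ⨅ n : ℕ, P {x : Θ × Θ | t₀ - 1/((n:ℝ)+1) < T x} := le_iInf heach
          _ = P {x : Θ × Θ | t₀ ≤ T x} := by rw [← hIe, ← hInter]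
          _ = h t₀ := hge_eq
      rw [hsetrw, hmid]
      exact le_antisymm hle hge
  -- the rearranged density
  have hgm : Measurable g := hganti.measurable
  set ρ : Θ × Θ → ENNReal := fun x => g (T x) with hρ
  have hρm : Measurable ρ := hgm.comp hTm
  set QT := P.withDensity ρ with hQT
  have hQTac : QT ≪ P := withDensity_absolutelyContinuous _ _
  have hrn : QT.rnDeriv P =ᵐ[P] ρ := Measure.rnDeriv_withDensity P hρm
  have hmap : P.map ρ = P.map f := by
    haveI : IsProbabilityMeasure (P.map ρ) := Measure.isProbabilityMeasure_map hρm.aemeasurable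
    refine MeasureTheory.Measure.ext_of_Iic _ _ (fun a => ?_)
    rw [Measure.map_apply hρm measurableSet_Iic, Measure.map_apply hf measurableSet_Iic]
    exact hA a
  have hmass : ∫⁻ x, ρ x ∂P = 1 := by
    have h1 : ∫⁻ x, ρ x ∂P = ∫⁻ y, y ∂(P.map ρ) := (lintegral_map measurable_id hρm).symm
    have h2 : ∫⁻ x, f x ∂P = ∫⁻ y, y ∂(P.map f) := (lintegral_map measurable_id hf).symm
    rw [h1, hmap, ← h2, hfdef, Measure.lintegral_rnDeriv hQ, measure_univ]
  haveI hQTprob : IsProbabilityMeasure QT := by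
    constructor
    rw [hQT, withDensity_apply _ MeasurableSet.univ, Measure.restrict_univ, hmass]
  have hrearr : IsRearrangement P Q QT := by
    intro c
    have hsets : P {x | QT.rnDeriv P x ≤ c} = P {x | ρ x ≤ c} := by
      apply measure_congr
      filter_upwards [hrn] with x hx
      change (QT.rnDeriv P x ≤ c) = (ρ x ≤ c)
      rw [hx]
    rw [hsets]
    exact hA c
  -- the final integral inequality
  set T' : Θ × Θ → ENNReal := fun x => ENNReal.ofReal (T x) with hT'
  have hT'm : Measurable T' := ENNReal.measurable_ofReal.comp hTm
  set ν := P.withDensity T' with hν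
  haveI : IsFiniteMeasure ν := by
    constructor
    rw [hν, withDensity_apply _ MeasurableSet.univ, Measure.restrict_univ]
    calc ∫⁻ x, T' x ∂P ≤ ∫⁻ _, ENNReal.ofReal M ∂P :=
          lintegral_mono (fun x => ENNReal.ofReal_le_ofReal (hM x))
      _ = ENNReal.ofReal M := by simp
      _ < ⊤ := ENNReal.ofReal_lt_top
  have hIQT : ∫⁻ x, T' x ∂QT = ∫⁻ x, ρ x ∂ν := by
    rw [hQT, hν, lintegral_withDensity_eq_lintegral_mul _ hρm hT'm,
      lintegral_withDensity_eq_lintegral_mul _ hT'm hρm]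
    apply lintegral_congr
    intro x
    simp [mul_comm]
  have hIQ : ∫⁻ x, T' x ∂Q = ∫⁻ x, f x ∂ν := by
    conv_lhs => rw [← Measure.withDensity_rnDeriv_eq Q P hQ]
    rw [hν, lintegral_withDensity_eq_lintegral_mul _ hf hT'm,
      lintegral_withDensity_eq_lintegral_mul _ hT'm hf]
    apply lintegral_congr
    intro x
    simp [mul_comm, hfdef]
  have hcomp : ∀ t : ℝ, ν {x | ENNReal.ofReal t < ρ x} ≤ ν {x | ENNReal.ofReal t < f x} := by
    intro t
    set c := ENNReal.ofReal t with hc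
    have hBm : MeasurableSet {x : Θ × Θ | c < ρ x} := measurableSet_lt measurable_const hρm
    have hAm : MeasurableSet {x : Θ × Θ | c < f x} := measurableSet_lt measurable_const hf
    have hPeq : P {x | c < ρ x} = P {x | c < f x} := by
      have h1 : {x : Θ × Θ | c < ρ x} = {x | ρ x ≤ c}ᶜ := by ext x; simp [not_le]
      have h2 : {x : Θ × Θ | c < f x} = {x | f x ≤ c}ᶜ := by ext x; simp [not_le]
      rw [h1, h2, measure_compl (measurableSet_le hρm measurable_const) (measure_ne_top _ _),
        measure_compl (measurableSet_le hf measurable_const) (measure_ne_top _ _)]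
      congr 1
      exact hA c
    rw [hν, withDensity_apply _ hBm, withDensity_apply _ hAm]
    set S₂ := {t' : ℝ | c < g t'} with hS₂
    have hlower : ∀ a b : ℝ, a ≤ b → b ∈ S₂ → a ∈ S₂ :=
      fun a b hab hb => lt_of_lt_of_le hb (hganti hab)
    rcases Set.eq_empty_or_nonempty S₂ with hS₂e | hS₂ne
    · have hBe : {x : Θ × Θ | c < ρ x} = ∅ := by
        ext x
        simp only [Set.mem_setOf_eq, Set.mem_empty_iff_false, iff_false, not_lt]
        by_contra hx
        push_neg at hx
        have : T x ∈ S₂ := hx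
        rw [hS₂e] at this
        exact this
      rw [hBe]
      simp
    · by_cases hbdd : BddAbove S₂
      · set s₀ := sSup S₂ with hs₀
        refine aux_bathtub P hT'm hAm hBm hPeq (s := ENNReal.ofReal s₀) ?_ ?_
        · intro x hx
          exact ENNReal.ofReal_le_ofReal (le_csSup hbdd hx)
        · intro x hx
          apply ENNReal.ofReal_le_ofReal
          by_contra hlt
          push_neg at hlt
          obtain ⟨t₁, ht₁, hlt₁⟩ := exists_lt_of_lt_csSup hS₂ne hlt
          exact hx (hlower _ _ hlt₁.le ht₁)
      · have hBuniv : {x : Θ × Θ | c < ρ x} = Set.univ := by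
          ext x
          simp only [Set.mem_setOf_eq, Set.mem_univ, iff_true]
          obtain ⟨t₁, ht₁S, hlt₁⟩ := (not_bddAbove_iff.mp hbdd) (T x)
          exact hlower _ _ hlt₁.le ht₁S
        have hPAc : P {x : Θ × Θ | c < f x}ᶜ = 0 := by
          rw [measure_compl hAm (measure_ne_top _ _), ← hPeq, hBuniv, measure_univ]
          simp
        have heq : ∫⁻ x in {x : Θ × Θ | c < f x}, T' x ∂P = ∫⁻ x, T' x ∂P := by
          rw [Measure.restrict_congr_set (MeasureTheory.ae_eq_univ.mpr hPAc),
            Measure.restrict_univ]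
        rw [heq]
        exact setLIntegral_le_lintegral _ _
  refine ⟨QT, hQTprob, hQTac, hrearr, ⟨ρ, hrn, ?_, ?_, ?_⟩, ?_⟩
  · exact fun x y hxy => hganti hxy.le
  · exact fun x y hxy => hganti hxy.le
  · intro x y hxy
    simp only [hρ]
    rw [hxy]
  · calc ∫⁻ x, ENNReal.ofReal (T x) ∂QT = ∫⁻ x, ρ x ∂ν := hIQT
      _ = ∫⁻ t in Set.Ioi (0:ℝ), ν {x | ENNReal.ofReal t < ρ x} := aux_layercake ν hρm
      _ ≤ ∫⁻ t in Set.Ioi (0:ℝ), ν {x | ENNReal.ofReal t < f x} :=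
          lintegral_mono (fun t => hcomp t)
      _ = ∫⁻ x, f x ∂ν := (aux_layercake ν hf).symm
      _ = ∫⁻ x, ENNReal.ofReal (T x) ∂Q := hIQ.symm

end
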